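/- arXiv:1505.00993 — 6 statements merged into one kernel-verified Lean document; each statement's English description precedes it below -/
import Mathlib

section
/- Let A be a Z-tensor of order m and dimension n (m ≥ 2) and b ∈ ℝ^n. Suppose the feasible set F = {x ∈ ℝ^n : x ≥ 0, A x^{m-1} − b ≥ 0} is nonempty. Then F has a unique least element x*, i.e., a member x* of F with x* ≤ x componentwise for every x ∈ F, and this x* is a solution of the tensor complementarity problem: x* ≥ 0, A (x*)^{m-1} − b ≥ 0, and ⟨x*, A (x*)^{m-1} − b⟩ = 0. -/
/-!
The map `x ↦ A x^{m-1}` of a Z-tensor is continuous and, on the nonnegative orthant, lowering the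
coordinates `j ≠ i` can only raise its `i`-th value. These two properties alone make the feasible
set closed and closed under componentwise minima, which yields a least element, and they force
complementarity at it.
-/

/-- `(A x^{m-1})_i = ∑_{i₂,…,i_m} a_{i i₂ … i_m} x_{i₂} ⋯ x_{i_m}`. -/
def tApply {n k : ℕ} (A : Fin n → (Fin k → Fin n) → ℝ) (x : Fin n → ℝ) : Fin n → ℝ :=
  fun i => ∑ j : Fin k → Fin n, A i j * ∏ t, x (j t)

/-- `A` is a Z-tensor: all off-diagonal entries (indices not all equal) are nonpositive. -/
def IsZTensor {n k : ℕ} (A : Fin n → (Fin k → Fin n) → ℝ) : Prop :=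
  ∀ i j, ¬ (∀ t, j t = i) → A i j ≤ 0

open Set Topology

section ZFunction

variable {ι : Type*}

def IsZFunction (F : (ι → ℝ) → ι → ℝ) : Prop :=
  ∀ ⦃x z : ι → ℝ⦄, 0 ≤ z → z ≤ x → ∀ i, z i = x i → F x i ≤ F z i

def feasibleSet (F : (ι → ℝ) → ι → ℝ) (b : ι → ℝ) : Set (ι → ℝ) :=
  {x | 0 ≤ x ∧ b ≤ F x}

variable {F : (ι → ℝ) → ι → ℝ} {b : ι → ℝ}

theorem IsZFunction.inf_mem_feasibleSet (hF : IsZFunction F) {x y : ι → ℝ}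
    (hx : x ∈ feasibleSet F b) (hy : y ∈ feasibleSet F b) : x ⊓ y ∈ feasibleSet F b := by
  have h0 : 0 ≤ x ⊓ y := le_inf hx.1 hy.1
  refine ⟨h0, fun i => ?_⟩
  rcases le_total (x i) (y i) with h | h
  · exact (hx.2 i).trans (hF h0 inf_le_left i (min_eq_left h))
  · exact (hy.2 i).trans (hF h0 inf_le_right i (min_eq_right h))

theorem isClosed_feasibleSet (hc : Continuous F) : IsClosed (feasibleSet F b) :=
  (isClosed_le continuous_const continuous_id).inter (isClosed_le continuous_const hc)

/-- Minimize `∑ i, x i` over the compact set of feasible points below a given one; meeting the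
minimizer with any feasible point does not increase the sum, so the minimizer lies below it. -/
theorem IsZFunction.exists_isLeast_feasibleSet [Fintype ι] (hF : IsZFunction F)
    (hc : Continuous F) (hne : (feasibleSet F b).Nonempty) : ∃ x, IsLeast (feasibleSet F b) x := by
  obtain ⟨x₀, hx₀⟩ := hne
  set K := feasibleSet F b ∩ Iic x₀
  have hK : IsCompact K :=
    isCompact_Icc.of_isClosed_subset ((isClosed_feasibleSet hc).inter isClosed_Iic)
      fun x hx => ⟨hx.1.1, hx.2⟩
  obtain ⟨x, hxK, hmin⟩ := hK.exists_isMinOn ⟨x₀, hx₀, le_refl x₀⟩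
    (continuous_finsetSum _ fun i _ => continuous_apply i).continuousOn
  refine ⟨x, hxK.1, fun y hy => ?_⟩
  have hxy : x ⊓ y ∈ K := ⟨hF.inf_mem_feasibleSet hxK.1 hy, mem_Iic.2 (inf_le_left.trans hxK.2)⟩
  have heq := (Finset.sum_eq_sum_iff_of_le fun i _ => (inf_le_left : x ⊓ y ≤ x) i).1
    ((Finset.sum_le_sum fun i _ => (inf_le_left : x ⊓ y ≤ x) i).antisymm (hmin hxy))
  exact fun i => (heq i (Finset.mem_univ i)).symm ▸ inf_le_right

/-- If `x i > 0` and the `i`-th constraint were slack, lowering `x i` slightly would keep the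
point feasible (the other constraints only grow, by the Z-property), contradicting leastness. -/
theorem IsZFunction.apply_eq_of_isLeast_of_pos [DecidableEq ι] (hF : IsZFunction F)
    (hc : Continuous F) {x : ι → ℝ} (hx : IsLeast (feasibleSet F b) x) {i : ι} (hi : 0 < x i) :
    F x i = b i := by
  refine (le_of_not_gt fun hslack => ?_).antisymm (hx.1.2 i)
  have hg : Continuous fun y => F (Function.update x i y) i :=
    (continuous_apply i).comp (hc.comp (continuous_const.update i continuous_id))
  have hnear : ∀ᶠ y in 𝓝[<] (x i), (b i < F (Function.update x i y) i ∧ 0 < y) ∧ y < x i := by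
    refine ((hg.tendsto (x i)).eventually_const_lt ?_ |>.and (lt_mem_nhds hi)).filter_mono
      nhdsWithin_le_nhds |>.and self_mem_nhdsWithin
    simpa using hslack
  obtain ⟨y, ⟨hby, hy0⟩, hyx⟩ := hnear.exists
  set w := Function.update x i y
  have hw0 : 0 ≤ w := le_update_iff.2 ⟨hy0.le, fun j _ => hx.1.1 j⟩
  have hwx : w ≤ x := update_le_iff.2 ⟨hyx.le, fun j _ => le_rfl⟩
  have hw : w ∈ feasibleSet F b := by
    refine ⟨hw0, fun j => ?_⟩
    by_cases hj : j = i
    · subst hj; exact hby.le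
    · exact (hx.1.2 j).trans (hF hw0 hwx j (Function.update_of_ne hj y x))
  have hxw := hx.2 hw i
  simp only [w, Function.update_self] at hxw
  linarith

end ZFunction

section ZTensor

variable {n k : ℕ} {A : Fin n → (Fin k → Fin n) → ℝ}

theorem IsZTensor.isZFunction (hA : IsZTensor A) : IsZFunction (tApply A) := by
  intro x z hz hzx i hi
  refine Finset.sum_le_sum fun j _ => ?_
  by_cases hj : ∀ t, j t = i
  · simp only [hj, hi, le_refl]
  · exact mul_le_mul_of_nonpos_left
      (Finset.prod_le_prod (fun t _ => hz (j t)) fun t _ => hzx (j t)) (hA i j hj)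

theorem continuous_tApply (A : Fin n → (Fin k → Fin n) → ℝ) : Continuous (tApply A) := by
  unfold tApply
  fun_prop

end ZTensor

theorem stmt4_general {n m : ℕ} (A : Fin n → (Fin (m - 1) → Fin n) → ℝ)
    (hA : IsZTensor A) (b : Fin n → ℝ)
    (hfeas : ∃ x : Fin n → ℝ, (∀ i, 0 ≤ x i) ∧ ∀ i, b i ≤ tApply A x i) :
    ∃ xs : Fin n → ℝ,
      ((∀ i, 0 ≤ xs i) ∧ (∀ i, b i ≤ tApply A xs i)) ∧
      (∀ x : Fin n → ℝ, ((∀ i, 0 ≤ x i) ∧ (∀ i, b i ≤ tApply A x i)) → ∀ i, xs i ≤ x i) ∧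
      (∀ y : Fin n → ℝ,
        (((∀ i, 0 ≤ y i) ∧ (∀ i, b i ≤ tApply A y i)) ∧
          (∀ x : Fin n → ℝ, ((∀ i, 0 ≤ x i) ∧ (∀ i, b i ≤ tApply A x i)) → ∀ i, y i ≤ x i))
        → y = xs) ∧
      ∑ i, xs i * (tApply A xs i - b i) = 0 := by
  have hF := hA.isZFunction
  have hc := continuous_tApply A
  obtain ⟨xs, hxs⟩ := hF.exists_isLeast_feasibleSet hc hfeas
  refine ⟨xs, hxs.1, fun x hx => hxs.2 hx,
    fun y hy => IsLeast.unique (s := feasibleSet _ b) hy hxs, Finset.sum_eq_zero fun i _ => ?_⟩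
  rcases (hxs.1.1 i).eq_or_lt with hzero | hpos
  · rw [← hzero, Pi.zero_apply, zero_mul]
  · rw [hF.apply_eq_of_isLeast_of_pos hc hxs hpos, sub_self, mul_zero]

/-- If the feasible set `{x : x ≥ 0, A x^{m-1} - b ≥ 0}` of a Z-tensor complementarity
problem is nonempty, it has a unique least element, and this least element solves the
tensor complementarity problem. -/
theorem stmt4 {n m : ℕ} (hm : 2 ≤ m) (A : Fin n → (Fin (m - 1) → Fin n) → ℝ)
    (hA : IsZTensor A) (b : Fin n → ℝ)
    (hfeas : ∃ x : Fin n → ℝ, (∀ i, 0 ≤ x i) ∧ ∀ i, b i ≤ tApply A x i) :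
    ∃ xs : Fin n → ℝ,
      ((∀ i, 0 ≤ xs i) ∧ (∀ i, b i ≤ tApply A xs i)) ∧
      (∀ x : Fin n → ℝ, ((∀ i, 0 ≤ x i) ∧ (∀ i, b i ≤ tApply A x i)) → ∀ i, xs i ≤ x i) ∧
      (∀ y : Fin n → ℝ,
        (((∀ i, 0 ≤ y i) ∧ (∀ i, b i ≤ tApply A y i)) ∧
          (∀ x : Fin n → ℝ, ((∀ i, 0 ≤ x i) ∧ (∀ i, b i ≤ tApply A x i)) → ∀ i, y i ≤ x i))
        → y = xs) ∧
      ∑ i, xs i * (tApply A xs i - b i) = 0 :=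
  stmt4_general A hA b hfeas
end

section
/- Let A be a partially Z-tensor of order m and dimension n (m ≥ 2) and let b ∈ ℝ^n with b ≥ 0. Then a vector x ∈ ℝ^n satisfies x ≥ 0, A x^{m-1} − b ≥ 0 and ⟨x, A x^{m-1} − b⟩ = 0 if and only if it satisfies x ≥ 0 and A x^{m-1} − b = 0. -/
/-- `A` is a partially Z-tensor: `a_{i₁ i₂ … i_m} ≤ 0` whenever `i₁ ∉ {i₂,…,i_m}`. -/
def IsPartiallyZTensor {n k : ℕ} (A : Fin n → (Fin k → Fin n) → ℝ) : Prop :=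
  ∀ i j, (∀ t, j t ≠ i) → A i j ≤ 0

theorem stmt5 {n m : ℕ} (hm : 2 ≤ m) (A : Fin n → (Fin (m - 1) → Fin n) → ℝ)
    (hA : IsPartiallyZTensor A) (b : Fin n → ℝ) (hb : ∀ i, 0 ≤ b i) (x : Fin n → ℝ) :
    ((∀ i, 0 ≤ x i) ∧ (∀ i, b i ≤ tApply A x i) ∧
        ∑ i, x i * (tApply A x i - b i) = 0)
      ↔ ((∀ i, 0 ≤ x i) ∧ ∀ i, tApply A x i - b i = 0) := by
  constructor
  · rintro ⟨hx, hge, hsum⟩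
    refine ⟨hx, fun i => ?_⟩
    have hterm : ∀ i ∈ Finset.univ, (0:ℝ) ≤ x i * (tApply A x i - b i) :=
      fun i _ => mul_nonneg (hx i) (by linarith [hge i])
    have hzero := (Finset.sum_eq_zero_iff_of_nonneg hterm).mp hsum i (Finset.mem_univ i)
    rcases mul_eq_zero.mp hzero with hxi | h
    · -- x i = 0, show tApply A x i ≤ b i
      have hle : tApply A x i ≤ 0 := by
        apply Finset.sum_nonpos
        intro j _
        by_cases hj : ∀ t, j t ≠ i
        · exact mul_nonpos_of_nonpos_of_nonneg (hA i j hj)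
            (Finset.prod_nonneg fun t _ => hx (j t))
        · push_neg at hj
          obtain ⟨t, ht⟩ := hj
          have : ∏ t, x (j t) = 0 :=
            Finset.prod_eq_zero (Finset.mem_univ t) (by rw [ht, hxi])
          simp [this]
      have := hge i
      have := hb i
      linarith
    · exact h
  · rintro ⟨hx, heq⟩
    refine ⟨hx, fun i => by linarith [heq i], ?_⟩
    simp [heq]
end

section
/- Let A be a Z-tensor of order m and dimension n (m ≥ 2) and let b ∈ ℝ^n with b ≥ 0. Then a vector x ∈ ℝ^n satisfies x ≥ 0, A x^{m-1} − b ≥ 0 and ⟨x, A x^{m-1} − b⟩ = 0 if and only if it satisfies x ≥ 0 and A x^{m-1} − b = 0. -/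
theorem stmt6 {n m : ℕ} (hm : 2 ≤ m) (A : Fin n → (Fin (m - 1) → Fin n) → ℝ)
    (hA : IsZTensor A) (b : Fin n → ℝ) (hb : ∀ i, 0 ≤ b i) (x : Fin n → ℝ) :
    ((∀ i, 0 ≤ x i) ∧ (∀ i, b i ≤ tApply A x i) ∧
        ∑ i, x i * (tApply A x i - b i) = 0)
      ↔ ((∀ i, 0 ≤ x i) ∧ ∀ i, tApply A x i - b i = 0) := by
  constructor
  · rintro ⟨hx, hbx, hsum⟩
    refine ⟨hx, fun i => ?_⟩
    have hterm : ∀ i ∈ Finset.univ, 0 ≤ x i * (tApply A x i - b i) :=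
      fun i _ => mul_nonneg (hx i) (sub_nonneg.2 (hbx i))
    have h0 := (Finset.sum_eq_zero_iff_of_nonneg hterm).1 hsum
    have hi := h0 i (Finset.mem_univ i)
    rcases mul_eq_zero.1 hi with hxi | h
    · have hm1 : 0 < m - 1 := by omega
      have hle : tApply A x i ≤ 0 := by
        apply Finset.sum_nonpos
        intro j _
        by_cases hj : ∀ t, j t = i
        · have hx0 : x (j ⟨0, hm1⟩) = 0 := by rw [hj ⟨0, hm1⟩]; exact hxi
          have hp : ∏ t, x (j t) = 0 :=
            Finset.prod_eq_zero (Finset.mem_univ ⟨0, hm1⟩) hx0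
          simp [hp]
        · exact mul_nonpos_of_nonpos_of_nonneg (hA i j hj)
            (Finset.prod_nonneg fun t _ => hx _)
      have h1 := hbx i
      have h2 := hb i
      linarith
    · linarith
  · rintro ⟨hx, h⟩
    exact ⟨hx, fun i => by linarith [h i], by simp [h]⟩
end

section
/- Let A be a strong M-tensor of order m and dimension n (m ≥ 2), and let b ∈ ℝ^n with b ≥ 0. Then the tensor complementarity problem TCP(A,b) is feasible, i.e., there exists x ∈ ℝ^n with x ≥ 0 and A x^{m-1} − b ≥ 0 (indeed there exists x ≥ 0 with A x^{m-1} = b). -/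
/-- `λ ∈ ℂ` is an eigenvalue of the order-`k+1` tensor `B` if `B x^{k} = λ x^{[k]}`
for some nonzero complex vector `x`, i.e. `(B x^k)_i = λ x_i^k` for all `i`. -/
def IsEigenvalue {n k : ℕ} (B : Fin n → (Fin k → Fin n) → ℝ) (lam : ℂ) : Prop :=
  ∃ x : Fin n → ℂ, x ≠ 0 ∧
    ∀ i, (∑ j : Fin k → Fin n, (B i j : ℂ) * ∏ t, x (j t)) = lam * x i ^ k

/-- `A` is a strong M-tensor: `A = s I - B` with `B ≥ 0`, `s > 0`, and `|λ| < s` for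
every eigenvalue `λ` of `B`; here `I` is the identity tensor. -/
def IsStrongMTensor {n k : ℕ} (A : Fin n → (Fin k → Fin n) → ℝ) : Prop :=
  ∃ (s : ℝ) (B : Fin n → (Fin k → Fin n) → ℝ),
    0 < s ∧ (∀ i j, 0 ≤ B i j) ∧
    (∀ lam : ℂ, IsEigenvalue B lam → ‖lam‖ < s) ∧
    (∀ i j, A i j = s * (if ∀ t, j t = i then (1 : ℝ) else 0) - B i j)

open Filter Topology

lemma exists_gt_forall_mul_lt {ι : Type*} [Finite ι] {c d : ι → ℝ} {t : ℝ}
    (h : ∀ i, t * c i < d i) : ∃ t' > t, ∀ i, t' * c i < d i := by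
  have hnhds : ∀ᶠ t' in 𝓝 t, ∀ i, t' * c i < d i := eventually_all.2 fun i =>
    (continuous_id.mul continuous_const).continuousAt.eventually_lt continuousAt_const (h i)
  obtain ⟨t', hlt, ht'⟩ :=
    ((hnhds.filter_mono nhdsWithin_le_nhds).and (self_mem_nhdsWithin (s := Set.Ioi t))).exists
  exact ⟨t', ht', hlt⟩

theorem MonotoneOn.exists_fixedPt_of_mapsTo {α : Type*} [ConditionallyCompleteLattice α]
    {a b : α} (hab : a ≤ b) {f : α → α} (hf : MonotoneOn f (Set.Icc a b))
    (hmaps : Set.MapsTo f (Set.Icc a b) (Set.Icc a b)) : ∃ x ∈ Set.Icc a b, f x = x := by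
  have : Fact (a ≤ b) := ⟨hab⟩
  let F : Set.Icc a b →o Set.Icc a b := ⟨hmaps.restrict f _ _, fun x y h => hf x.2 y.2 h⟩
  exact ⟨F.lfp, F.lfp.2, congrArg Subtype.val F.map_lfp⟩

section Tensor

variable {n k : ℕ} {B B' : Fin n → (Fin k → Fin n) → ℝ} {x y : Fin n → ℝ}

lemma tApply_mono (hB : 0 ≤ B) (hx : 0 ≤ x) (hxy : x ≤ y) : tApply B x ≤ tApply B y :=
  fun i => Finset.sum_le_sum fun j _ => mul_le_mul_of_nonneg_left
    (Finset.prod_le_prod (fun _ _ => hx _) fun _ _ => hxy _) (hB i j)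

lemma tApply_nonneg (hB : 0 ≤ B) (hx : 0 ≤ x) : 0 ≤ tApply B x :=
  fun i => Finset.sum_nonneg fun j _ => mul_nonneg (hB i j) (Finset.prod_nonneg fun _ _ => hx _)

lemma tApply_le_tApply_of_le (hBB' : B ≤ B') (hx : 0 ≤ x) : tApply B x ≤ tApply B' x :=
  fun i => Finset.sum_le_sum fun j _ => mul_le_mul_of_nonneg_right (hBB' i j)
    (Finset.prod_nonneg fun _ _ => hx _)

lemma tApply_smul (B : Fin n → (Fin k → Fin n) → ℝ) (c : ℝ) (x : Fin n → ℝ) :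
    tApply B (c • x) = c ^ k • tApply B x := by
  ext i
  simp [tApply, Finset.mul_sum, Finset.prod_mul_distrib, mul_left_comm]

lemma tApply_lt_tApply (hk : k ≠ 0) (hB : ∀ i j, 0 < B i j) (hx : 0 ≤ x) (hxy : x < y)
    (i : Fin n) : tApply B x i < tApply B y i := by
  obtain ⟨hle, i₀, hi₀⟩ := Pi.lt_def.1 hxy
  refine Finset.sum_lt_sum (fun j _ => ?_) ⟨fun _ => i₀, Finset.mem_univ _, ?_⟩
  · exact mul_le_mul_of_nonneg_left
      (Finset.prod_le_prod (fun _ _ => hx _) fun _ _ => hle _) (hB i j).le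
  · simp only [Finset.prod_const, Finset.card_univ, Fintype.card_fin]
    exact mul_lt_mul_of_pos_left (pow_lt_pow_left₀ hi₀ (hx i₀) hk) (hB i _)

lemma tApply_pos (hk : k ≠ 0) (hB : ∀ i j, 0 < B i j) (hx : 0 < x) (i : Fin n) :
    0 < tApply B x i := by
  simpa [tApply, zero_pow hk] using tApply_lt_tApply hk hB le_rfl hx i

lemma continuous_tApply_s7 :
    Continuous fun p : (Fin n → (Fin k → Fin n) → ℝ) × (Fin n → ℝ) => tApply p.1 p.2 := by
  unfold tApply
  fun_prop

lemma isEigenvalue_ofReal {t : ℝ} (hx : x ≠ 0) (h : tApply B x = t • x ^ k) :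
    IsEigenvalue B t := by
  refine ⟨fun i => x i, fun h0 => hx (funext fun i => by simpa using congrFun h0 i),
    fun i => ?_⟩
  have := congrArg Complex.ofReal (congrFun h i)
  simp only [tApply, Pi.smul_apply, Pi.pow_apply, smul_eq_mul] at this
  push_cast at this
  exact this

lemma tApply_eq_smul_pow_sub {A : Fin n → (Fin k → Fin n) → ℝ} {s : ℝ}
    (hA : ∀ i j, A i j = s * (if ∀ t, j t = i then (1 : ℝ) else 0) - B i j) (x : Fin n → ℝ) :
    tApply A x = s • x ^ k - tApply B x := by
  ext i
  simp [tApply, hA, sub_mul, Finset.sum_sub_distrib, ite_mul, ← funext_iff]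

lemma le_sum_of_smul_pow_le_tApply {t : ℝ} (hB : 0 ≤ B) (hx : 0 ≤ x) (hx0 : x ≠ 0)
    (h : t • x ^ k ≤ tApply B x) : t ≤ ∑ i, ∑ j, B i j := by
  obtain ⟨i, hi⟩ := Function.ne_iff.1 hx0
  have : Nonempty (Fin n) := ⟨i⟩
  obtain ⟨i₀, hi₀⟩ := Finite.exists_max x
  have hpos : 0 < x i₀ ^ k := pow_pos ((lt_of_le_of_ne (hx i) (Ne.symm hi)).trans_le (hi₀ i)) k
  have hrow : tApply B x i₀ ≤ (∑ j, B i₀ j) * x i₀ ^ k := by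
    rw [Finset.sum_mul]
    refine Finset.sum_le_sum fun j _ => mul_le_mul_of_nonneg_left ?_ (hB i₀ j)
    calc ∏ t, x (j t) ≤ ∏ _t : Fin k, x i₀ :=
          Finset.prod_le_prod (fun _ _ => hx _) fun _ _ => hi₀ _
      _ = x i₀ ^ k := by simp
  calc t ≤ ∑ j, B i₀ j := le_of_mul_le_mul_right ((h i₀).trans hrow) hpos
    _ ≤ ∑ i, ∑ j, B i j :=
      Finset.single_le_sum (fun i _ => Finset.sum_nonneg fun j _ => hB i j) (Finset.mem_univ i₀)

lemma smul_pow_le_tApply_smul {t c : ℝ} (hc : 0 ≤ c) (h : t • x ^ k ≤ tApply B x) :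
    t • (c • x) ^ k ≤ tApply B (c • x) := by
  rw [tApply_smul, smul_pow, smul_comm]
  exact smul_le_smul_of_nonneg_left h (pow_nonneg hc k)

lemma exists_gt_smul_pow_le_tApply (hk : k ≠ 0) (hB : ∀ i j, 0 < B i j) {t : ℝ} (ht : 0 < t)
    (hy : 0 ≤ y) (hle : t • y ^ k ≤ tApply B y) (hne : t • y ^ k ≠ tApply B y) :
    ∃ t' > t, ∃ z, 0 < z ∧ t' • z ^ k ≤ tApply B z := by
  -- `z = (B y^k / t)^(1/k)` lies strictly above `y`, so positivity of `B` makes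
  -- `t z^[k] = B y^k < B z^k` strict in every coordinate, which leaves room to increase `t`.
  have hBy : 0 ≤ tApply B y := tApply_nonneg (fun i j => (hB i j).le) hy
  set z : Fin n → ℝ := fun i => (tApply B y i / t) ^ (k⁻¹ : ℝ)
  have hz : 0 ≤ z := fun i => Real.rpow_nonneg (div_nonneg (hBy i) ht.le) _
  have hzk : t • z ^ k = tApply B y := funext fun i => by
    simp [z, Real.rpow_inv_natCast_pow (div_nonneg (hBy i) ht.le) hk, mul_div_cancel₀ _ ht.ne']
  have hyz : y < z := by
    refine lt_of_le_of_ne (fun i => le_of_pow_le_pow_left₀ hk (hz i) ?_) ?_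
    · exact le_of_mul_le_mul_left ((hle i).trans_eq (congrFun hzk i).symm) ht
    · intro h
      exact hne (h ▸ hzk)
  obtain ⟨t', ht', h⟩ := exists_gt_forall_mul_lt (c := z ^ k) (d := tApply B z) fun i =>
    (congrFun hzk i).trans_lt (tApply_lt_tApply hk hB hy hyz i)
  exact ⟨t', ht', z, hy.trans_lt hyz, fun i => (h i).le⟩

theorem exists_pos_eigenvector_of_pos [Nonempty (Fin n)] (hk : k ≠ 0)
    (hB : ∀ i j, 0 < B i j) :
    ∃ (t : ℝ) (x : Fin n → ℝ), (∀ i, 0 < x i) ∧ ‖x‖ = 1 ∧ tApply B x = t • x ^ k := by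
  set K : Set (Fin n → ℝ) := Set.Ici 0 ∩ Metric.sphere 0 1
  have hK : IsCompact K := (isCompact_sphere 0 1).inter_left isClosed_Ici
  have hnormalize : ∀ z : Fin n → ℝ, 0 < z → ‖z‖⁻¹ • z ∈ K := fun z hz =>
    ⟨smul_nonneg (inv_nonneg.2 (norm_nonneg z)) hz.le,
      mem_sphere_zero_iff_norm.2 (norm_smul_inv_norm hz.ne')⟩
  have hKpos : ∀ y ∈ K, 0 < y := fun y hy =>
    lt_of_le_of_ne hy.1 fun h => by simpa [← h] using hy.2
  obtain ⟨y₀, hy₀⟩ : K.Nonempty := ⟨_, hnormalize 1 zero_lt_one⟩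
  obtain ⟨t₀, ht₀, hy₀t₀⟩ := exists_gt_forall_mul_lt (t := 0) (c := y₀ ^ k)
    (d := tApply B y₀) fun i => by simpa using tApply_pos hk hB (hKpos y₀ hy₀) i
  set S : Set (ℝ × (Fin n → ℝ)) :=
    (Set.Icc t₀ (∑ i, ∑ j, B i j) ×ˢ K) ∩ {p | p.1 • p.2 ^ k ≤ tApply B p.2}
  have hS : IsCompact S := (isCompact_Icc.prod hK).inter_right <|
    isClosed_le (by fun_prop) (continuous_tApply_s7.comp (continuous_const.prodMk continuous_snd))
  have hmem : ∀ t, ∀ y ∈ K, t₀ ≤ t → t • y ^ k ≤ tApply B y → (t, y) ∈ S :=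
    fun t y hy ht h => ⟨⟨⟨ht, le_sum_of_smul_pow_le_tApply (fun i j => (hB i j).le) hy.1
      (hKpos y hy).ne' h⟩, hy⟩, h⟩
  obtain ⟨⟨t, y⟩, ⟨⟨⟨ht, -⟩, hy⟩, hty⟩, hmax⟩ :=
    hS.exists_isMaxOn ⟨_, hmem t₀ y₀ hy₀ le_rfl fun i => (hy₀t₀ i).le⟩ continuous_fst.continuousOn
  have heig : tApply B y = t • y ^ k := by
    by_contra hne
    obtain ⟨t', ht', z, hz, hz'⟩ :=
      exists_gt_smul_pow_le_tApply hk hB (ht₀.trans_le ht) hy.1 hty (Ne.symm hne)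
    exact (hmax (hmem t' _ (hnormalize z hz) (ht.trans ht'.le)
      (smul_pow_le_tApply_smul (by positivity) hz'))).not_gt ht'
  refine ⟨t, y, fun i => ?_, mem_sphere_zero_iff_norm.1 hy.2, heig⟩
  have := tApply_pos hk hB (hKpos y hy) i
  rw [heig] at this
  refine lt_of_le_of_ne (hy.1 i) fun h => ?_
  simp [← h, zero_pow hk] at this

lemma exists_eigenpair_of_forall_add_const {s C : ℝ}
    (h : ∀ ε ∈ Set.Ioc (0 : ℝ) 1, ∃ t ∈ Set.Icc s C, ∃ x ∈ Metric.sphere (0 : Fin n → ℝ) 1,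
      tApply (fun i j => B i j + ε) x = t • x ^ k) :
    ∃ t ≥ s, ∃ x ∈ Metric.sphere (0 : Fin n → ℝ) 1, tApply B x = t • x ^ k := by
  set T : Set (ℝ × ℝ × (Fin n → ℝ)) :=
    (Set.Icc 0 1 ×ˢ Set.Icc s C ×ˢ Metric.sphere 0 1) ∩
      {p | tApply (fun i j => B i j + p.1) p.2.2 = p.2.1 • p.2.2 ^ k}
  have hT : IsCompact T :=
    (isCompact_Icc.prod (isCompact_Icc.prod (isCompact_sphere 0 1))).inter_right <|
      isClosed_eq (continuous_tApply_s7.comp (f := fun p : ℝ × ℝ × (Fin n → ℝ) =>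
        ((fun i j => B i j + p.1), p.2.2)) (by fun_prop)) (by fun_prop)
  have hIoc : Set.Ioc 0 1 ⊆ Prod.fst '' T := fun ε hε => by
    obtain ⟨t, ht, x, hx, hεx⟩ := h ε hε
    exact ⟨(ε, t, x), ⟨⟨Set.Ioc_subset_Icc_self hε, ht, hx⟩, hεx⟩, rfl⟩
  obtain ⟨⟨_, t, x⟩, ⟨⟨-, ⟨hst, -⟩, hx⟩, hBx⟩, rfl⟩ : (0 : ℝ) ∈ Prod.fst '' T :=
    (hT.image continuous_fst).isClosed.closure_subset_iff.2 hIoc (by simp [closure_Ioc])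
  exact ⟨t, hst, x, hx, by simpa using hBx⟩

theorem exists_tApply_lt_smul_pow (hk : k ≠ 0) {s : ℝ} (hB : 0 ≤ B)
    (hspec : ∀ lam : ℂ, IsEigenvalue B lam → ‖lam‖ < s) :
    ∃ v : Fin n → ℝ, 0 ≤ v ∧ ∀ i, tApply B v i < s * v i ^ k := by
  cases isEmpty_or_nonempty (Fin n)
  · exact ⟨0, le_rfl, isEmptyElim⟩
  by_contra! hsub
  obtain ⟨t, hst, x, hx, hBx⟩ := exists_eigenpair_of_forall_add_const (B := B) (k := k)
      (s := s) (C := ∑ i, ∑ j, (B i j + 1)) fun ε ⟨hε0, hε1⟩ => by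
    have hBε : B ≤ fun i j => B i j + ε := fun i j => le_add_of_nonneg_right hε0.le
    obtain ⟨t, x, hx0, hx1, hx⟩ :=
      exists_pos_eigenvector_of_pos (B := fun i j => B i j + ε) hk fun i j =>
        add_pos_of_nonneg_of_pos (hB i j) hε0
    have hst : s ≤ t := by
      by_contra! hts
      obtain ⟨i, hi⟩ := hsub x fun i => (hx0 i).le
      have hle : tApply B x i ≤ t * x i ^ k :=
        (tApply_le_tApply_of_le hBε (fun i => (hx0 i).le) i).trans_eq (congrFun hx i)
      linarith [mul_lt_mul_of_pos_right hts (pow_pos (hx0 i) k)]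
    have htC : t ≤ ∑ i, ∑ j, (B i j + 1) :=
      (le_sum_of_smul_pow_le_tApply (hB.trans hBε) (fun i => (hx0 i).le)
        (fun h => by simp [h] at hx1) hx.ge).trans
        (Finset.sum_le_sum fun i _ => Finset.sum_le_sum fun j _ => add_le_add_right hε1 _)
    exact ⟨t, ⟨hst, htC⟩, x, mem_sphere_zero_iff_norm.2 hx1, hx⟩
  have := hspec t (isEigenvalue_ofReal (ne_zero_of_mem_unit_sphere ⟨x, hx⟩) hBx)
  rw [Complex.norm_real, Real.norm_eq_abs] at this
  linarith [le_abs_self t]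

lemma exists_add_tApply_le_smul_pow (hk : k ≠ 0) {s : ℝ} {v : Fin n → ℝ} (hv : 0 ≤ v)
    (hsub : ∀ i, tApply B v i < s * v i ^ k) (b : Fin n → ℝ) :
    ∃ w, 0 ≤ w ∧ b + tApply B w ≤ s • w ^ k := by
  have hlarge : ∀ᶠ c : ℝ in atTop, 0 ≤ c ∧ ∀ i, b i ≤ c ^ k * (s * v i ^ k - tApply B v i) :=
    (eventually_ge_atTop 0).and <| eventually_all.2 fun i =>
      ((tendsto_pow_atTop hk).eventually_ge_atTop (b i / (s * v i ^ k - tApply B v i))).mono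
        fun c hc => (div_le_iff₀ (sub_pos.2 (hsub i))).1 hc
  obtain ⟨c, hc0, hc⟩ := hlarge.exists
  refine ⟨c • v, smul_nonneg hc0 hv, fun i => ?_⟩
  simp only [tApply_smul, smul_pow, Pi.add_apply, Pi.smul_apply, Pi.pow_apply, smul_eq_mul]
  linarith [hc i]

theorem exists_smul_pow_eq_add_tApply (hk : k ≠ 0) {s : ℝ} (hs : 0 < s) (hB : 0 ≤ B)
    {b w : Fin n → ℝ} (hb : 0 ≤ b) (hw : 0 ≤ w) (hsup : b + tApply B w ≤ s • w ^ k) :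
    ∃ x, 0 ≤ x ∧ s • x ^ k = b + tApply B x := by
  set G : (Fin n → ℝ) → Fin n → ℝ := fun x i => ((b i + tApply B x i) / s) ^ (k⁻¹ : ℝ)
  have harg : ∀ x, 0 ≤ x → ∀ i, 0 ≤ (b i + tApply B x i) / s := fun x hx i =>
    div_nonneg (add_nonneg (hb i) (tApply_nonneg hB hx i)) hs.le
  have hG : ∀ x, 0 ≤ x → s • G x ^ k = b + tApply B x := fun x hx => funext fun i => by
    simp [G, Real.rpow_inv_natCast_pow (harg x hx i) hk, mul_div_cancel₀ _ hs.ne']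
  have hmono : MonotoneOn G (Set.Icc 0 w) := fun x hx y _ hxy i =>
    Real.rpow_le_rpow (harg x hx.1 i)
      (div_le_div_of_nonneg_right (add_le_add_right (tApply_mono hB hx.1 hxy i) _) hs.le)
      (by positivity)
  have hGw : G w ≤ w := fun i => by
    calc G w i ≤ (w i ^ k) ^ (k⁻¹ : ℝ) := Real.rpow_le_rpow (harg w hw i)
          ((div_le_iff₀ hs).2 (by simpa [mul_comm] using hsup i)) (by positivity)
      _ = w i := Real.pow_rpow_inv_natCast (hw i) hk
  have hmaps : Set.MapsTo G (Set.Icc 0 w) (Set.Icc 0 w) := fun x hx =>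
    ⟨fun i => Real.rpow_nonneg (harg x hx.1 i) _,
      (hmono hx ⟨hw, le_rfl⟩ hx.2).trans hGw⟩
  obtain ⟨x, hx, hfix⟩ := hmono.exists_fixedPt_of_mapsTo hw hmaps
  exact ⟨x, hx.1, by simpa only [hfix] using hG x hx.1⟩

end Tensor

/-- For a strong M-tensor `A` and `b ≥ 0`, `TCP(A,b)` is feasible; indeed there is a
nonnegative `x` with `A x^{m-1} = b`. -/
theorem stmt7 {n m : ℕ} (hm : 2 ≤ m) (A : Fin n → (Fin (m - 1) → Fin n) → ℝ)
    (hA : IsStrongMTensor A) (b : Fin n → ℝ) (hb : ∀ i, 0 ≤ b i) :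
    ∃ x : Fin n → ℝ, (∀ i, 0 ≤ x i) ∧ (∀ i, b i ≤ tApply A x i) ∧
      ∀ i, tApply A x i = b i := by
  obtain ⟨s, B, hs, hB, hspec, hAB⟩ := hA
  have hk : m - 1 ≠ 0 := by omega
  obtain ⟨v, hv, hsub⟩ := exists_tApply_lt_smul_pow hk hB hspec
  obtain ⟨w, hw, hsup⟩ := exists_add_tApply_le_smul_pow hk hv hsub b
  obtain ⟨x, hx, hxeq⟩ := exists_smul_pow_eq_add_tApply hk hs hB hb hw hsup
  have hAx : tApply A x = b := by
    rw [tApply_eq_smul_pow_sub hAB, hxeq, add_sub_cancel_right]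
  exact ⟨x, hx, fun i => (congrFun hAx i).ge, congrFun hAx⟩
end

section
/- Let A be a Z-tensor of order m and dimension n (m ≥ 2) and let b ∈ ℝ^n with b ≥ 0. Suppose the problem (P0) of minimizing ‖x‖₀ subject to x ≥ 0, A x^{m-1} − b ≥ 0, ⟨x, A x^{m-1} − b⟩ = 0 is feasible. Then (P0) has a solution x* (i.e., x* is feasible and ‖x*‖₀ ≤ ‖x‖₀ for every feasible x) which is also the unique optimal solution of the problem (P1) of minimizing e^T x subject to x ≥ 0 and A x^{m-1} − b = 0. -/
/-- `‖x‖₀`, the number of nonzero components of `x`. -/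
noncomputable def l0 {n : ℕ} (x : Fin n → ℝ) : ℕ :=
  (Finset.univ.filter (fun i => x i ≠ 0)).card


lemma tApply_cont {n k : ℕ} (A : Fin n → (Fin k → Fin n) → ℝ) (i : Fin n) :
    Continuous fun x : Fin n → ℝ => tApply A x i := by
  unfold tApply; fun_prop

lemma tApply_mono_s11 {n k : ℕ} {A : Fin n → (Fin k → Fin n) → ℝ} (hA : IsZTensor A)
    {x z : Fin n → ℝ} (hz0 : ∀ i, 0 ≤ z i) (hzx : ∀ i, z i ≤ x i) (i : Fin n)
    (hzi : z i = x i) : tApply A x i ≤ tApply A z i := by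
  unfold tApply
  apply Finset.sum_le_sum
  intro j _
  by_cases h : ∀ t, j t = i
  · have : ∀ t, x (j t) = z (j t) := fun t => by rw [h t, hzi]
    rw [Finset.prod_congr rfl (fun t _ => this t)]
  · exact mul_le_mul_of_nonpos_left
      (Finset.prod_le_prod (fun t _ => hz0 _) (fun t _ => hzx _)) (hA i j h)

/-- If `x ≥ 0` and `x i = 0`, then `(Ax)_i ≤ 0` for a Z-tensor (with `k ≥ 1`). -/
lemma tApply_nonpos {n k : ℕ} {A : Fin n → (Fin k → Fin n) → ℝ} (hA : IsZTensor A)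
    (hk : 1 ≤ k) {x : Fin n → ℝ} (hx0 : ∀ i, 0 ≤ x i) (i : Fin n) (hxi : x i = 0) :
    tApply A x i ≤ 0 := by
  unfold tApply
  apply Finset.sum_nonpos
  intro j _
  by_cases h : ∀ t, j t = i
  · have : ∏ t, x (j t) = 0 := by
      have : Nonempty (Fin k) := ⟨⟨0, hk⟩⟩
      obtain ⟨t⟩ := this
      exact Finset.prod_eq_zero (Finset.mem_univ t) (by rw [h t, hxi])
    rw [this, mul_zero]
  · exact mul_nonpos_of_nonpos_of_nonneg (hA i j h)
      (Finset.prod_nonneg fun t _ => hx0 _)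

/-- Exact relaxation: for a Z-tensor `A` and `b ≥ 0`, if `(P₀)` is feasible then it
has a solution `xs` which is also the unique optimal solution of `(P₁)`. -/
theorem stmt11 {n m : ℕ} (hm : 2 ≤ m) (A : Fin n → (Fin (m - 1) → Fin n) → ℝ)
    (hA : IsZTensor A) (b : Fin n → ℝ) (hb : ∀ i, 0 ≤ b i)
    (hfeas : ∃ x : Fin n → ℝ, (∀ i, 0 ≤ x i) ∧ (∀ i, b i ≤ tApply A x i) ∧
      ∑ i, x i * (tApply A x i - b i) = 0) :
    ∃ xs : Fin n → ℝ,
      -- xs solves (P₀): it is feasible and of minimal ℓ₀ norm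
      ((∀ i, 0 ≤ xs i) ∧ (∀ i, b i ≤ tApply A xs i) ∧
        ∑ i, xs i * (tApply A xs i - b i) = 0) ∧
      (∀ x : Fin n → ℝ, ((∀ i, 0 ≤ x i) ∧ (∀ i, b i ≤ tApply A x i) ∧
        ∑ i, x i * (tApply A x i - b i) = 0) → l0 xs ≤ l0 x) ∧
      -- xs is the unique optimal solution of (P₁)
      ((∀ i, 0 ≤ xs i) ∧ ∀ i, tApply A xs i - b i = 0) ∧
      (∀ y : Fin n → ℝ, ((∀ i, 0 ≤ y i) ∧ ∀ i, tApply A y i - b i = 0) →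
        (∑ i, xs i ≤ ∑ i, y i) ∧ (∑ i, y i = ∑ i, xs i → y = xs)) := by
  obtain ⟨w, hw0, hwb, -⟩ := hfeas
  -- the (relaxed) feasible set and its compact truncation
  set G : Set (Fin n → ℝ) := {x | (∀ i, 0 ≤ x i) ∧ ∀ i, b i ≤ tApply A x i} with hG
  set K : Set (Fin n → ℝ) := G ∩ Set.Icc 0 w with hK
  have hGclosed : IsClosed G := by
    have : G = (⋂ i, {x : Fin n → ℝ | 0 ≤ x i}) ∩ ⋂ i, {x : Fin n → ℝ | b i ≤ tApply A x i} := by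
      ext x; simp [hG, Set.mem_iInter]
    rw [this]
    exact (isClosed_iInter fun i => isClosed_le continuous_const (continuous_apply i)).inter
      (isClosed_iInter fun i => isClosed_le continuous_const (tApply_cont A i))
  have hKcomp : IsCompact K :=
    isCompact_Icc.of_isClosed_subset (hGclosed.inter isClosed_Icc) Set.inter_subset_right
  have hwK : w ∈ K := ⟨⟨hw0, hwb⟩, ⟨fun i => hw0 i, fun i => le_refl _⟩⟩
  obtain ⟨xs, hxsK, hmin⟩ := hKcomp.exists_isMinOn ⟨w, hwK⟩
    ((continuous_finset_sum _ fun i _ => continuous_apply i).continuousOn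
      (f := fun x : Fin n → ℝ => ∑ i, x i))
  obtain ⟨⟨hxs0, hxsb⟩, hxsle⟩ := hxsK
  -- xs is the least element of G
  have hleast : ∀ x ∈ G, ∀ i, xs i ≤ x i := by
    intro x hx i
    set z : Fin n → ℝ := fun j => min (x j) (xs j) with hz
    have hz0 : ∀ j, 0 ≤ z j := fun j => le_min (hx.1 j) (hxs0 j)
    have hzG : z ∈ G := by
      refine ⟨hz0, fun j => ?_⟩
      rcases min_cases (x j) (xs j) with ⟨hzj, -⟩ | ⟨hzj, -⟩
      · exact le_trans (hx.2 j) (tApply_mono_s11 hA hz0 (fun t => min_le_left _ _) j hzj)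
      · exact le_trans (hxsb j) (tApply_mono_s11 hA hz0 (fun t => min_le_right _ _) j hzj)
    have hzK : z ∈ K := ⟨hzG, ⟨fun j => hz0 j, fun j => le_trans (min_le_right _ _) (hxsle.2 j)⟩⟩
    have h1 : ∑ j, xs j ≤ ∑ j, z j := hmin hzK
    have h2 : ∀ j ∈ Finset.univ, z j ≤ xs j := fun j _ => min_le_right _ _
    have h3 : ∑ j, z j = ∑ j, xs j := le_antisymm (Finset.sum_le_sum h2) h1
    have h4 := (Finset.sum_eq_sum_iff_of_le h2).mp h3 i (Finset.mem_univ i)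
    calc xs i = z i := h4.symm
    _ ≤ x i := min_le_left _ _
  -- xs satisfies the equality A xs^{m-1} = b
  have hk1 : 1 ≤ m - 1 := by omega
  have heq : ∀ i, tApply A xs i = b i := by
    intro i
    rcases eq_or_lt_of_le (hxsb i) with h | hlt
    · exact h.symm
    exfalso
    by_cases hxi : xs i = 0
    · exact absurd (le_trans (tApply_nonpos hA hk1 hxs0 i hxi) (hb i)) (not_le.mpr hlt)
    have hxi' : 0 < xs i := lt_of_le_of_ne (hxs0 i) (Ne.symm hxi)
    -- perturb xs at coordinate i
    have hcont : ContinuousAt (fun ε : ℝ => tApply A (Function.update xs i (xs i - ε)) i) 0 := by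
      apply (tApply_cont A i).continuousAt.comp
      fun_prop
    have h0 : (fun ε : ℝ => tApply A (Function.update xs i (xs i - ε)) i) 0
        = tApply A xs i := by simp
    have h1 : ∀ᶠ ε : ℝ in nhds 0,
        b i < tApply A (Function.update xs i (xs i - ε)) i := by
      have := hcont.preimage_mem_nhds (Ioi_mem_nhds (h0 ▸ hlt))
      filter_upwards [this] with ε hε using hε
    have h2 : ∀ᶠ ε : ℝ in nhds 0, ε < xs i := eventually_lt_nhds hxi'
    obtain ⟨ε, ⟨hε1, hε2⟩, hε3⟩ :=
      (((h1.and h2).filter_mono nhdsWithin_le_nhds).and self_mem_nhdsWithin).exists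
        (f := nhdsWithin 0 (Set.Ioi 0))
    set y : Fin n → ℝ := Function.update xs i (xs i - ε) with hy
    have hyle : ∀ j, y j ≤ xs j := by
      intro j
      by_cases hj : j = i
      · subst hj; rw [hy, Function.update_self]; linarith
      · rw [hy, Function.update_of_ne hj]
    have hy0 : ∀ j, 0 ≤ y j := by
      intro j
      by_cases hj : j = i
      · subst hj; rw [hy, Function.update_self]; linarith
      · rw [hy, Function.update_of_ne hj]; exact hxs0 j
    have hyG : y ∈ G := by
      refine ⟨hy0, fun j => ?_⟩
      by_cases hj : j = i
      · subst hj; exact le_of_lt hε1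
      · exact le_trans (hxsb j)
          (tApply_mono_s11 hA hy0 hyle j (by rw [hy, Function.update_of_ne hj]))
    have hyK : y ∈ K := ⟨hyG, ⟨fun j => hy0 j, fun j => le_trans (hyle j) (hxsle.2 j)⟩⟩
    have hstrict : ∑ j, y j < ∑ j, xs j := by
      apply Finset.sum_lt_sum (fun j _ => hyle j)
      exact ⟨i, Finset.mem_univ i, by rw [hy, Function.update_self]; linarith⟩
    exact absurd (hmin hyK) (not_le.mpr hstrict)
  -- assemble the conclusions
  refine ⟨xs, ⟨hxs0, hxsb, ?_⟩, ?_, ⟨hxs0, fun i => by rw [heq i, sub_self]⟩, ?_⟩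
  · apply Finset.sum_eq_zero
    intro i _
    rw [heq i, sub_self, mul_zero]
  · rintro x ⟨hx0, hxb, -⟩
    apply Finset.card_le_card
    intro i hi
    rw [Finset.mem_filter] at hi ⊢
    refine ⟨Finset.mem_univ i, ?_⟩
    have : 0 < xs i := lt_of_le_of_ne (hxs0 i) (Ne.symm hi.2)
    have := lt_of_lt_of_le this (hleast x ⟨hx0, hxb⟩ i)
    exact ne_of_gt this
  · rintro y ⟨hy0, hyb⟩
    have hyG : y ∈ G := ⟨hy0, fun i => le_of_eq (by linarith [hyb i])⟩
    have hle : ∀ i, xs i ≤ y i := hleast y hyG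
    refine ⟨Finset.sum_le_sum fun i _ => hle i, fun hsum => ?_⟩
    funext i
    exact ((Finset.sum_eq_sum_iff_of_le (fun j _ => hle j)).mp hsum.symm i
      (Finset.mem_univ i)).symm
end

section
/- Let A be a partially Z-tensor of order m and dimension n (m ≥ 2), let b ∈ ℝ^n with b ≥ 0, and let y ∈ ℝ^n satisfy y ≥ 0, A y^{m-1} − b ≥ 0 and ⟨y, A y^{m-1} − b⟩ = 0. Then ⟨A y^{m-1} − b, A y^{m-1}⟩ ≤ 0, and consequently ‖A y^{m-1} − b‖₂² ≤ 0, so that A y^{m-1} = b. -/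
theorem stmt14 {n m : ℕ} (hm : 2 ≤ m) (A : Fin n → (Fin (m - 1) → Fin n) → ℝ)
    (hA : IsPartiallyZTensor A) (b : Fin n → ℝ) (hb : ∀ i, 0 ≤ b i)
    (y : Fin n → ℝ) (hy : ∀ i, 0 ≤ y i) (hAy : ∀ i, b i ≤ tApply A y i)
    (hcomp : ∑ i, y i * (tApply A y i - b i) = 0) :
    (∑ i, (tApply A y i - b i) * tApply A y i ≤ 0) ∧
    (∑ i, (tApply A y i - b i) ^ 2 ≤ 0) ∧
    ∀ i, tApply A y i = b i := by
  have key : ∀ i, tApply A y i = b i := by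
    intro i
    have hzero : y i * (tApply A y i - b i) = 0 :=
      (Finset.sum_eq_zero_iff_of_nonneg
        (fun i _ => mul_nonneg (hy i) (sub_nonneg.2 (hAy i)))).1 hcomp i (Finset.mem_univ i)
    by_contra h
    have hyi : y i = 0 := by
      rcases mul_eq_zero.1 hzero with h' | h'
      · exact h'
      · exact absurd h' (sub_ne_zero_of_ne h)
    have hle : tApply A y i ≤ 0 := by
      apply Finset.sum_nonpos
      intro j _
      by_cases hj : ∀ t, j t ≠ i
      · exact mul_nonpos_iff.2 (Or.inr ⟨hA i j hj, Finset.prod_nonneg fun t _ => hy (j t)⟩)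
      · push_neg at hj
        obtain ⟨t, ht⟩ := hj
        have : ∏ t, y (j t) = 0 := Finset.prod_eq_zero (Finset.mem_univ t) (by rw [ht, hyi])
        simp [this]
    have h1 := hAy i
    have h2 := hb i
    exact h (by linarith)
  refine ⟨?_, ?_, key⟩ <;> simp [key]
end
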